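/- arXiv:1711.03748 — 2 statements merged into one kernel-verified Lean document; each statement's English description precedes it below -/
import Mathlib

section
/- If X is an orthodomain with enough directions, then the set oDir(X) of directions of X, with the partial operation ⊕, orthocomplementation d ↦ d', and constants 0, 1, is an orthoalgebra: ⊕ is commutative and associative, d' is the unique direction with d ⊕ d' = 1, and d ⊕ d is defined only for d = 0. -/
section OrthodomainDefs

/-- Order-theoretic compactness: `k` is compact if whenever `k ≤ ⋁D` for a
nonempty directed set `D` having a least upper bound, then `k ≤ d` for some
`d ∈ D`. -/
def CompactIn {P : Type*} [PartialOrder P] (k : P) : Prop :=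
  ∀ D : Set P, D.Nonempty → DirectedOn (· ≤ ·) D →
    ∀ l, IsLUB D l → k ≤ l → ∃ d ∈ D, k ≤ d

/-- A poset is a finite partition lattice if it is order-isomorphic to the
lattice of partitions (equivalence relations) of a finite set. -/
def IsPartitionLat (P : Type*) [PartialOrder P] : Prop :=
  ∃ (α : Type) (_ : Finite α), Nonempty (P ≃o Setoid α)

/-- A Boolean domain: an algebraic (complete, compactly generated) lattice in
which the principal downset of each compact element is a finite partition
lattice. -/
def IsBooleanDomain (P : Type*) [PartialOrder P] : Prop :=
  (∀ S : Set P, ∃ l, IsLUB S l) ∧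
  (∀ x : P, IsLUB {k : P | CompactIn k ∧ k ≤ x} x) ∧
  (∀ k : P, CompactIn k → IsPartitionLat {y : P // y ≤ k})

variable (X : Type*) [PartialOrder X] [OrderBot X]

/-- An orthodomain: a poset with least element in which (1) directed subsets
have joins; (2) the poset is atomistic and atoms are compact; (3) every
principal ideal is a Boolean domain; (4) distinct atoms covered by a common
element join to that element. -/
structure IsOrthodomain : Prop where
  directed_joins : ∀ D : Set X, D.Nonempty → DirectedOn (· ≤ ·) D → ∃ l, IsLUB D l
  atomistic : ∀ x : X, IsLUB {a : X | IsAtom a ∧ a ≤ x} x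
  atoms_compact : ∀ a : X, IsAtom a → CompactIn a
  downset_boolean : ∀ x : X, IsBooleanDomain {y : X // y ≤ x}
  atom_cover : ∀ x y w : X, IsAtom x → IsAtom y → x ≠ y →
    x ⋖ w → y ⋖ w → IsLUB {x, y} w

end OrthodomainDefs

section Directions

variable {X : Type*} [PartialOrder X] [OrderBot X]

/-- `j` is the join of `a` and `b` inside the principal ideal `↓t`. -/
def IsJoinIn (t a b j : X) : Prop :=
  a ≤ j ∧ b ≤ j ∧ j ≤ t ∧ ∀ c : X, c ≤ t → a ≤ c → b ≤ c → j ≤ c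

/-- `x` is a dual modular element of the Boolean domain `↓t`:
`(x ∨ y) ∧ z = x ∨ (y ∧ z)` whenever `x ≤ z`, and
`(w ∨ x) ∧ y = w ∨ (x ∧ y)` whenever `w ≤ y` (all elements and lattice
operations taken inside `↓t`; meets in `↓t` agree with greatest lower bounds
in `X`). -/
def DualModularIn (t x : X) : Prop :=
  x ≤ t ∧
  (∀ y z j m m' : X, y ≤ t → z ≤ t → x ≤ z → IsJoinIn t x y j →
    IsGLB {j, z} m → IsGLB {y, z} m' → IsJoinIn t x m' m) ∧
  (∀ w y j m m' : X, w ≤ t → y ≤ t → w ≤ y → IsJoinIn t w x j →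
    IsGLB {j, y} m → IsGLB {x, y} m' → IsJoinIn t w m' m)

/-- A basic element: the least element or an atom. -/
def BasicIn (x : X) : Prop := x = ⊥ ∨ IsAtom x

/-- `(y, z)` is a principal pair for the basic element `x` in the Boolean
domain `↓t`: `y` and `z` are dual modular in `↓t`, `y ∧ z = x`, and either
`y = ⊤` and `z` is basic, or `z = ⊤` and `y` is basic, or `y ∨ z = ⊤` and
`y ∧ z = x` is basic but not dual modular. -/
def PrincipalPairFor (t x y z : X) : Prop :=
  DualModularIn t y ∧ DualModularIn t z ∧ IsGLB {y, z} x ∧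
  ((y = t ∧ BasicIn z) ∨ (z = t ∧ BasicIn y) ∨
    (IsJoinIn t y z t ∧ BasicIn x ∧ ¬ DualModularIn t x))

/-- A direction for a basic element `x` of an orthodomain `X`: a map
`d : ↑x → X²` such that (1) `d y` is a principal pair for `x` in the Boolean
domain `↓y`; (2) if `y ≤ z` and `d z = (v, w)` then `d y = (y ∧ v, y ∧ w)`;
(3) if `x ⋖ y, z` with `d y = (x, y)` and `d z = (z, x)`, then `y ∨ z` exists
and covers both `y` and `z`. -/
def IsDirectionFor (x : X) (d : {y : X // x ≤ y} → X × X) : Prop :=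
  BasicIn x ∧
  (∀ y : {y : X // x ≤ y}, PrincipalPairFor y.1 x (d y).1 (d y).2) ∧
  (∀ y z : {y : X // x ≤ y}, y.1 ≤ z.1 →
    IsGLB {y.1, (d z).1} (d y).1 ∧ IsGLB {y.1, (d z).2} (d y).2) ∧
  (∀ y z : {y : X // x ≤ y}, x ⋖ y.1 → x ⋖ z.1 →
    d y = (x, y.1) → d z = (z.1, x) →
    ∃ j : X, IsLUB {y.1, z.1} j ∧ y.1 ⋖ j ∧ z.1 ⋖ j)

end Directions

section ODir

variable (X : Type*) [PartialOrder X] [OrderBot X]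

/-- `X` has enough directions: it is proper (no basic maximal elements) and
every basic element has a direction. -/
def EnoughDirections : Prop :=
  (∀ x : X, BasicIn x → ¬ IsMax x) ∧
  (∀ x : X, BasicIn x → ∃ d, IsDirectionFor x d)

/-- The set `oDir(X)` of directions of `X` (for basic elements). -/
def ODir := {p : Σ x : X, ({y : X // x ≤ y} → X × X) // IsDirectionFor p.1 p.2}

variable {X}

/-- `d` is the direction `0`, the direction for `⊥` with `0 w = (⊥, w)`. -/
def IsZeroD (d : ODir X) : Prop :=
  d.1.1 = (⊥ : X) ∧ ∀ y, d.1.2 y = ((⊥ : X), y.1)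

/-- `d` is the direction `1`, the direction for `⊥` with `1 w = (w, ⊥)`. -/
def IsOneD (d : ODir X) : Prop :=
  d.1.1 = (⊥ : X) ∧ ∀ y, d.1.2 y = (y.1, (⊥ : X))

/-- `e` is the orthocomplement `d'` of `d`: a direction for the same basic
element, whose values are the componentwise swaps of those of `d`. -/
def IsComplD (d e : ODir X) : Prop :=
  e.1.1 = d.1.1 ∧
  ∀ (y : {y : X // e.1.1 ≤ y}) (y' : {y : X // d.1.1 ≤ y}), y.1 = y'.1 →
    e.1.2 y = ((d.1.2 y').2, (d.1.2 y').1)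

/-- The partial orthogonal sum on `oDir(X)`, as a relation: `OSum d e f` means
`d ⊕ e` is defined and equals `f`.  It is defined by: `d ⊕ 0 = d = 0 ⊕ d`;
`d ⊕ d' = 1`; and, for `d` a direction for an atom `x` and `e` a direction for
an atom `y` with `x`, `y` near, `w = x ∨ y` and `z` the third atom below `w`:
if `d w = (x, w)` and `e w = (y, w)`, then `d ⊕ e` is the direction for `z`
whose value at `w` is `(w, z)`. -/
def OSum (d e f : ODir X) : Prop :=
  (IsZeroD e ∧ f = d) ∨ (IsZeroD d ∧ f = e) ∨
  (IsComplD d e ∧ IsOneD f) ∨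
  (∃ w z : X, IsAtom d.1.1 ∧ IsAtom e.1.1 ∧ d.1.1 ≠ e.1.1 ∧
    IsLUB {d.1.1, e.1.1} w ∧
    IsAtom z ∧ z ≠ d.1.1 ∧ z ≠ e.1.1 ∧ z ⋖ w ∧ f.1.1 = z ∧
    (∃ hd : d.1.1 ≤ w, d.1.2 ⟨w, hd⟩ = (d.1.1, w)) ∧
    (∃ he : e.1.1 ≤ w, e.1.2 ⟨w, he⟩ = (e.1.1, w)) ∧
    (∃ hf : f.1.1 ≤ w, f.1.2 ⟨w, hf⟩ = (w, z)))

end ODir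

/-!
Everything rests on the fact that a direction `d` for a basic element `x` is pure: either
`d y = (x, y)` for all `y ≥ x`, or `d y = (y, x)` for all `y ≥ x`. At a cover `w` of `x` the
value is one of these two pairs, and condition (3) on directions rules out covers of both kinds:
for `x = ⊥` because `⊥` is dual modular, and for an atom `x` because the join `j` of two covers
would carry a chain `⊥ < x < w < j` below a compact element, whereas the principal ideal of a
compact element is a partition lattice on at most three points (four points would give two
disjoint pairs whose join has only two atoms below it, while in an orthodomain the join of two
atoms always has a third one). Atomisticity then spreads the orientation from the covers to all
of `↑x`. So a direction is determined by its basic element and its value at a single cover, and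
the orthoalgebra laws follow by case analysis on the definition of `⊕`.
-/

namespace Setoid

variable {α : Type*}

def pair (u v : α) : Setoid α where
  r a b := a = b ∨ (a = u ∧ b = v) ∨ (a = v ∧ b = u)
  iseqv := ⟨fun _ => Or.inl rfl, by grind, by grind⟩

theorem pair_apply {u v a b : α} :
    pair u v a b ↔ a = b ∨ (a = u ∧ b = v) ∨ (a = v ∧ b = u) :=
  Iff.rfl

theorem pair_comm (u v : α) : pair u v = pair v u :=
  eq_iff_rel_eq.2 <| by ext; simp only [pair_apply]; tauto

theorem pair_le_iff {u v : α} {r : Setoid α} : pair u v ≤ r ↔ r u v :=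
  ⟨fun h => h (Or.inr (Or.inl ⟨rfl, rfl⟩)), fun h a b hab => by
    rcases hab with rfl | ⟨rfl, rfl⟩ | ⟨rfl, rfl⟩
    exacts [r.refl' a, h, r.symm' h]⟩

theorem pair_self (u : α) : pair u u = ⊥ :=
  le_bot_iff.1 fun _ _ hab => by
    rcases hab with h | ⟨rfl, rfl⟩ | ⟨rfl, rfl⟩ <;> first | exact h | rfl

theorem pair_eq_pair_iff {u v u' v' : α} (h : u ≠ v) :
    pair u v = pair u' v' ↔ (u = u' ∧ v = v') ∨ (u = v' ∧ v = u') := by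
  refine ⟨fun he => ?_, ?_⟩
  · rcases pair_le_iff.1 he.le with h' | h' | h'
    exacts [absurd h' h, Or.inl h', Or.inr h']
  · rintro (⟨rfl, rfl⟩ | ⟨rfl, rfl⟩)
    exacts [rfl, pair_comm _ _]

theorem isAtom_pair {u v : α} (h : u ≠ v) : IsAtom (pair u v) := by
  refine ⟨fun hb => h (pair_le_iff.1 hb.le), fun r hr => le_bot_iff.1 fun a b hab => ?_⟩
  rcases hr.le hab with h' | ⟨rfl, rfl⟩ | ⟨rfl, rfl⟩
  · exact h'
  · exact absurd (pair_le_iff.2 hab) hr.not_ge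
  · exact absurd (pair_le_iff.2 (r.symm' hab)) hr.not_ge

theorem exists_eq_pair_of_isAtom {r : Setoid α} (hr : IsAtom r) :
    ∃ u v, u ≠ v ∧ r = pair u v := by
  obtain ⟨u, v, huv, h⟩ : ∃ u v, u ≠ v ∧ r u v := by
    by_contra! hc
    exact hr.1 (le_bot_iff.1 fun a b hab => by_contra fun hne => hc a b hne hab)
  refine ⟨u, v, huv, ((pair_le_iff.2 h).lt_or_eq.resolve_left fun hlt => ?_).symm⟩
  exact (isAtom_pair huv).1 (hr.2 _ hlt)

theorem eq_or_eq_of_isAtom_of_le_sup {u₁ u₂ v₁ v₂ : α} (hu : u₁ ≠ u₂) (hv : v₁ ≠ v₂)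
    (h₁₁ : u₁ ≠ v₁) (h₁₂ : u₁ ≠ v₂) (h₂₁ : u₂ ≠ v₁) (h₂₂ : u₂ ≠ v₂) {r : Setoid α}
    (hr : IsAtom r) (hle : r ≤ pair u₁ u₂ ⊔ pair v₁ v₂) : r = pair u₁ u₂ ∨ r = pair v₁ v₂ := by
  classical
  -- `ker f` has the blocks `{u₁, u₂}`, `{v₁, v₂}` and singletons
  let f : α → α := fun x => if x = u₂ then u₁ else if x = v₂ then v₁ else x
  have hf : pair u₁ u₂ ⊔ pair v₁ v₂ ≤ ker f :=
    sup_le (pair_le_iff.2 (by simp [ker_def, f, hu, h₁₂]))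
      (pair_le_iff.2 (by simp [ker_def, f, hv, h₂₁.symm, h₂₂.symm]))
  obtain ⟨s, t, hst, rfl⟩ := exists_eq_pair_of_isAtom hr
  have hst' := pair_le_iff.1 (hle.trans hf)
  simp only [ker_def, f] at hst'
  rw [pair_eq_pair_iff hst, pair_eq_pair_iff hst]
  split_ifs at hst' <;> grind

theorem eq_or_eq_or_eq_of_sup_eq_top {p q c : α} (h : pair p c ⊔ pair q c = ⊤) (x : α) :
    x = p ∨ x = q ∨ x = c := by
  classical
  let g : α → α := fun x => if x = p ∨ x = q then c else x
  have hg : pair p c ⊔ pair q c ≤ ker g :=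
    sup_le (pair_le_iff.2 (by by_cases p = c <;> simp_all [ker_def, g]))
      (pair_le_iff.2 (by by_cases q = c <;> simp_all [ker_def, g]))
  have hx := pair_le_iff.1 ((le_top : pair x c ≤ ⊤).trans (h ▸ hg))
  simp only [ker_def, g] at hx
  split_ifs at hx <;> grind

theorem exists_eq_pair_of_sup_eq_top {r s : Setoid α} (hr : IsAtom r) (hs : IsAtom s)
    (hne : r ≠ s) (htop : r ⊔ s = ⊤) :
    ∃ p q c, p ≠ q ∧ p ≠ c ∧ q ≠ c ∧ (∀ x, x = p ∨ x = q ∨ x = c) ∧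
      r = pair p c ∧ s = pair q c := by
  obtain ⟨u₁, v₁, h₁, rfl⟩ := exists_eq_pair_of_isAtom hr
  obtain ⟨u₂, v₂, h₂, rfl⟩ := exists_eq_pair_of_isAtom hs
  obtain ⟨p, q, c, hp, hq⟩ : ∃ p q c, pair u₁ v₁ = pair p c ∧ pair u₂ v₂ = pair q c := by
    by_cases hshare : u₂ = u₁ ∨ u₂ = v₁ ∨ v₂ = u₁ ∨ v₂ = v₁
    · rcases hshare with rfl | rfl | rfl | rfl
      exacts [⟨v₁, v₂, u₂, pair_comm _ _, pair_comm _ _⟩, ⟨u₁, v₂, u₂, rfl, pair_comm _ _⟩,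
        ⟨v₁, u₂, v₂, pair_comm _ _, rfl⟩, ⟨u₁, u₂, v₂, rfl, rfl⟩]
    · push Not at hshare
      obtain ⟨h₂₁, h₂₂, h₃₁, h₃₂⟩ := hshare
      have := eq_or_eq_of_isAtom_of_le_sup h₁ h₂ h₂₁.symm h₃₁.symm h₂₂.symm h₃₂.symm
        (isAtom_pair h₂₁.symm) (htop ▸ le_top : pair u₁ u₂ ≤ _)
      rw [pair_eq_pair_iff h₂₁.symm, pair_eq_pair_iff h₂₁.symm] at this
      grind
  simp only [hp, hq] at hne htop hr hs ⊢
  refine ⟨p, q, c, fun h => hne (h ▸ rfl), fun h => hr.1 (h ▸ pair_self c),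
    fun h => hs.1 (h ▸ pair_self c), eq_or_eq_or_eq_of_sup_eq_top htop, rfl, rfl⟩

theorem natCard_le_three_of_sup_eq_top {r s : Setoid α} (hr : IsAtom r) (hs : IsAtom s)
    (hne : r ≠ s) (htop : r ⊔ s = ⊤) : Nat.card α ≤ 3 := by
  obtain ⟨p, q, c, -, -, -, huniv, -⟩ := exists_eq_pair_of_sup_eq_top hr hs hne htop
  have hsurj : Function.Surjective ![p, q, c] := fun x => by
    rcases huniv x with rfl | rfl | rfl
    exacts [⟨0, rfl⟩, ⟨1, rfl⟩, ⟨2, rfl⟩]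
  simpa using Nat.card_le_card_of_surjective _ hsurj

theorem exists_third_atom_of_sup_eq_top {r s : Setoid α} (hr : IsAtom r) (hs : IsAtom s)
    (hne : r ≠ s) (htop : r ⊔ s = ⊤) :
    ∃ t, IsAtom t ∧ t ≠ r ∧ t ≠ s ∧ ∀ t', IsAtom t' → t' = r ∨ t' = s ∨ t' = t := by
  obtain ⟨p, q, c, hpq, hpc, hqc, huniv, rfl, rfl⟩ :=
    exists_eq_pair_of_sup_eq_top hr hs hne htop
  refine ⟨pair p q, isAtom_pair hpq, ?_, ?_, fun t' ht' => ?_⟩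
  · rw [Ne, pair_eq_pair_iff hpq]; grind
  · rw [Ne, pair_eq_pair_iff hpq]; grind
  obtain ⟨a, b, hab, rfl⟩ := exists_eq_pair_of_isAtom ht'
  rw [pair_eq_pair_iff hab, pair_eq_pair_iff hab, pair_eq_pair_iff hab]
  rcases huniv a with rfl | rfl | rfl <;> rcases huniv b with rfl | rfl | rfl <;> grind

theorem natCard_quotient_lt [Finite α] {r s : Setoid α} (h : r < s) :
    Nat.card (Quotient s) < Nat.card (Quotient r) := by
  classical
  have := Fintype.ofFinite α
  obtain ⟨a, b, hs, hr⟩ : ∃ a b, s a b ∧ ¬ r a b := by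
    by_contra! hc
    exact h.not_ge fun a b hab => hc a b hab
  rw [Nat.card_eq_fintype_card, Nat.card_eq_fintype_card]
  refine Fintype.card_lt_of_surjective_not_injective (map_of_le h.le)
    (Quotient.ind fun a => ⟨⟦a⟧, rfl⟩) fun hinj => hr (Quotient.exact (hinj ?_))
  exact Quotient.sound hs

theorem three_lt_natCard [Finite α] {r s t : Setoid α} (hr : ⊥ < r) (hrs : r < s)
    (hst : s < t) : 3 < Nat.card α := by
  obtain ⟨a, -⟩ : ∃ a b, r a b ∧ a ≠ b := by
    by_contra! hc
    exact hr.ne' (le_bot_iff.1 fun a b => hc a b)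
  have : Nonempty (Quotient t) := ⟨⟦a⟧⟩
  have : 0 < Nat.card (Quotient t) := Nat.card_pos
  have h₁ := natCard_quotient_lt hr
  have h₂ := natCard_quotient_lt hrs
  have h₃ := natCard_quotient_lt hst
  rw [Nat.card_congr quotientBotEquiv] at h₁
  omega

end Setoid

theorem CompactIn.of_isLUB_pair {P : Type*} [PartialOrder P] {a b j : P} (ha : CompactIn a)
    (hb : CompactIn b) (hj : IsLUB {a, b} j) : CompactIn j := by
  intro D hne hdir l hl hjl
  obtain ⟨da, hda, hada⟩ := ha D hne hdir l hl ((hj.1 (by simp)).trans hjl)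
  obtain ⟨db, hdb, hbdb⟩ := hb D hne hdir l hl ((hj.1 (by simp)).trans hjl)
  obtain ⟨d, hd, hdad, hdbd⟩ := hdir da hda db hdb
  exact ⟨d, hd, hj.2 (by rintro x (rfl | rfl) <;> order)⟩

section JoinIn

variable {X : Type*} [PartialOrder X] {t a b j : X}

theorem IsJoinIn.symm (h : IsJoinIn t a b j) : IsJoinIn t b a j :=
  ⟨h.2.1, h.1, h.2.2.1, fun c hc hb ha => h.2.2.2 c hc ha hb⟩

theorem IsJoinIn.unique {j' : X} (h : IsJoinIn t a b j) (h' : IsJoinIn t a b j') : j = j' :=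
  le_antisymm (h.2.2.2 j' h'.2.2.1 h'.1 h'.2.1) (h'.2.2.2 j h.2.2.1 h.1 h.2.1)

theorem IsJoinIn.restrict (h : IsJoinIn t a b j) : IsJoinIn j a b j :=
  ⟨h.1, h.2.1, le_rfl, fun c hc => h.2.2.2 c (hc.trans h.2.2.1)⟩

theorem IsJoinIn.isLUB_Iic (h : IsJoinIn t a b j) :
    IsLUB {(⟨a, h.1.trans h.2.2.1⟩ : Set.Iic t), ⟨b, h.2.1.trans h.2.2.1⟩} ⟨j, h.2.2.1⟩ :=
  ⟨by rintro x (rfl | rfl); exacts [h.1, h.2.1],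
    fun c hc => h.2.2.2 c c.2 (hc (Set.mem_insert _ _)) (hc (Set.mem_insert_of_mem _ rfl))⟩

theorem IsLUB.isJoinIn_Iic {a b j : Set.Iic t} (h : IsLUB {a, b} j) : IsJoinIn t (a : X) b j :=
  ⟨h.1 (by simp), h.1 (by simp), j.2, fun c hc hac hbc =>
    h.2 (show (⟨c, hc⟩ : Set.Iic t) ∈ upperBounds {a, b} by
      rintro x (rfl | rfl); exacts [hac, hbc])⟩

theorem IsLUB.isJoinIn (h : IsLUB {a, b} j) : IsJoinIn j a b j :=
  ⟨h.1 (by simp), h.1 (by simp), le_rfl, fun _ _ hac hbc =>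
    h.2 (by rintro x (rfl | rfl); exacts [hac, hbc])⟩

theorem isJoinIn_bot_left [OrderBot X] (hbt : b ≤ t) : IsJoinIn t ⊥ b b :=
  ⟨bot_le, le_rfl, hbt, fun _ _ _ h => h⟩

theorem isGLB_pair_of_le (hab : a ≤ b) : IsGLB {a, b} a :=
  ⟨by rintro x (rfl | rfl); exacts [le_rfl, hab], fun _ hc => hc (Set.mem_insert _ _)⟩

theorem isGLB_pair_of_ge (hba : b ≤ a) : IsGLB {a, b} b :=
  Set.pair_comm b a ▸ isGLB_pair_of_le hba

end JoinIn

theorem three_lt_natCard_of_orderIso {X : Type*} [PartialOrder X] [OrderBot X] {k x y : X}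
    {γ : Type*} [Finite γ] (ψ : Set.Iic k ≃o Setoid γ) (h₁ : ⊥ < x) (h₂ : x < y)
    (h₃ : y < k) : 3 < Nat.card γ := by
  have hx : x ≤ k := h₂.le.trans h₃.le
  have hy : y ≤ k := h₃.le
  refine Setoid.three_lt_natCard (r := ψ ⟨x, hx⟩) (s := ψ ⟨y, hy⟩) (t := ψ ⊤) ?_
    (ψ.strictMono (show (⟨x, hx⟩ : Set.Iic k) < ⟨y, hy⟩ from h₂))
    (ψ.strictMono (show (⟨y, hy⟩ : Set.Iic k) < ⊤ from h₃))
  rw [← ψ.map_bot]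
  exact ψ.strictMono (show (⊥ : Set.Iic k) < ⟨x, hx⟩ from h₁)

namespace IsOrthodomain

variable {X : Type*} [PartialOrder X] [OrderBot X]

theorem compactIn_Iic (h : IsOrthodomain X) {k t : X} (hk : CompactIn k) (hkt : k ≤ t) :
    CompactIn (⟨k, hkt⟩ : Set.Iic t) := by
  intro D hne hdir l hl hkl
  have hdir' : DirectedOn (· ≤ ·) (Subtype.val '' D) := hdir.mono_comp fun _ _ h => h
  obtain ⟨m, hm⟩ := h.directed_joins _ (hne.image _) hdir'
  have hmt : m ≤ t := hm.2 (by rintro _ ⟨x, -, rfl⟩; exact x.2)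
  have hml : m = l := le_antisymm (hm.2 (by rintro _ ⟨x, hx, rfl⟩; exact hl.1 hx))
    (hl.2 (show (⟨m, hmt⟩ : Set.Iic t) ∈ upperBounds D from fun x hx => hm.1 ⟨x, hx, rfl⟩))
  obtain ⟨_, ⟨d, hd, rfl⟩, hkd⟩ := hk _ (hne.image _) hdir' m hm (hml ▸ hkl)
  exact ⟨d, hd, hkd⟩

theorem exists_orderIso_setoid (h : IsOrthodomain X) {k : X} (hk : CompactIn (⊤ : Set.Iic k)) :
    ∃ β : Type, Finite β ∧ Nonempty (Set.Iic k ≃o Setoid β) := by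
  obtain ⟨β, hβ, ⟨ψ⟩⟩ := (h.downset_boolean k).2.2 (⊤ : Set.Iic k) hk
  exact ⟨β, hβ, ⟨OrderIso.IicTop.symm.trans ψ⟩⟩

theorem exists_orderIso_setoid_of_isJoinIn (h : IsOrthodomain X) {a b w : X} (ha : IsAtom a)
    (hb : IsAtom b) (hab : a ≠ b) (hw : IsJoinIn w a b w) :
    ∃ (β : Type) (_ : Finite β) (ψ : Set.Iic w ≃o Setoid β),
      IsAtom (ψ ⟨a, hw.1⟩) ∧ IsAtom (ψ ⟨b, hw.2.1⟩) ∧ ψ ⟨a, hw.1⟩ ≠ ψ ⟨b, hw.2.1⟩ ∧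
        ψ ⟨a, hw.1⟩ ⊔ ψ ⟨b, hw.2.1⟩ = ⊤ := by
  have hk : CompactIn (⊤ : Set.Iic w) :=
    (h.compactIn_Iic (h.atoms_compact a ha) hw.1).of_isLUB_pair
      (h.compactIn_Iic (h.atoms_compact b hb) hw.2.1) hw.isLUB_Iic
  obtain ⟨β, hβ, ⟨ψ⟩⟩ := h.exists_orderIso_setoid hk
  refine ⟨β, hβ, ψ, (ψ.isAtom_iff _).2 (ha.Iic _), (ψ.isAtom_iff _).2 (hb.Iic _),
    fun he => hab (Subtype.ext_iff.1 (ψ.injective he)), isLUB_pair.unique ?_⟩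
  rw [← ψ.map_top, ← Set.image_pair, ψ.isLUB_image']
  exact hw.isLUB_Iic

theorem exists_third_atom (h : IsOrthodomain X) {a b w : X} (ha : IsAtom a) (hb : IsAtom b)
    (hab : a ≠ b) (hw : IsJoinIn w a b w) : ∃ c, IsAtom c ∧ c ≤ w ∧ c ≠ a ∧ c ≠ b := by
  obtain ⟨β, _, ψ, hA, hB, hAB, htop⟩ := h.exists_orderIso_setoid_of_isJoinIn ha hb hab hw
  obtain ⟨σ, hσ, hσa, hσb, -⟩ := Setoid.exists_third_atom_of_sup_eq_top hA hB hAB htop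
  refine ⟨ψ.symm σ, ((ψ.symm.isAtom_iff σ).2 hσ).of_isAtom_coe_Iic, (ψ.symm σ).2,
    fun he => hσa ?_, fun he => hσb ?_⟩
  · rw [← ψ.apply_symm_apply σ]; exact congrArg ψ (Subtype.ext he)
  · rw [← ψ.apply_symm_apply σ]; exact congrArg ψ (Subtype.ext he)

theorem third_atom_unique (h : IsOrthodomain X) {a b w : X} (ha : IsAtom a) (hb : IsAtom b)
    (hab : a ≠ b) (hw : IsJoinIn w a b w) {c c' : X} (hc : IsAtom c) (hcw : c ≤ w)
    (hca : c ≠ a) (hcb : c ≠ b) (hc' : IsAtom c') (hc'w : c' ≤ w) (hc'a : c' ≠ a)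
    (hc'b : c' ≠ b) : c = c' := by
  obtain ⟨β, _, ψ, hA, hB, hAB, htop⟩ := h.exists_orderIso_setoid_of_isJoinIn ha hb hab hw
  have hinj : ∀ {x y : X} (hx : x ≤ w) (hy : y ≤ w), ψ ⟨x, hx⟩ = ψ ⟨y, hy⟩ → x = y :=
    fun _ _ he => Subtype.ext_iff.1 (ψ.injective he)
  obtain ⟨σ, -, -, -, hσ⟩ := Setoid.exists_third_atom_of_sup_eq_top hA hB hAB htop
  obtain he | he | he := hσ _ ((ψ.isAtom_iff _).2 (hc.Iic hcw))
  · exact absurd (hinj _ _ he) hca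
  · exact absurd (hinj _ _ he) hcb
  obtain he' | he' | he' := hσ _ ((ψ.isAtom_iff _).2 (hc'.Iic hc'w))
  · exact absurd (hinj _ _ he') hc'a
  · exact absurd (hinj _ _ he') hc'b
  · exact hinj _ _ (he.trans he'.symm)

theorem covBy_of_isJoinIn (h : IsOrthodomain X) {a b w : X} (ha : IsAtom a) (hb : IsAtom b)
    (hab : a ≠ b) (hw : IsJoinIn w a b w) {z : X} (hz : IsAtom z) (hzw : z ≤ w) : z ⋖ w := by
  obtain ⟨β, _, ψ, hA, hB, hAB, htop⟩ := h.exists_orderIso_setoid_of_isJoinIn ha hb hab hw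
  refine ⟨hzw.lt_of_ne fun hzw' => hab ?_, fun y hzy hyw => ?_⟩
  · subst hzw'
    exact ((hz.le_iff_eq ha.1).1 hw.1).trans ((hz.le_iff_eq hb.1).1 hw.2.1).symm
  · exact (three_lt_natCard_of_orderIso ψ hz.bot_lt hzy hyw).not_ge
      (Setoid.natCard_le_three_of_sup_eq_top hA hB hAB htop)

theorem isLUB_of_isJoinIn (h : IsOrthodomain X) {a b w : X} (ha : IsAtom a) (hb : IsAtom b)
    (hab : a ≠ b) (hw : IsJoinIn w a b w) {z z' : X} (hz : IsAtom z) (hz' : IsAtom z')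
    (hzz' : z ≠ z') (hzw : z ≤ w) (hz'w : z' ≤ w) : IsLUB {z, z'} w :=
  h.atom_cover z z' w hz hz' hzz' (h.covBy_of_isJoinIn ha hb hab hw hz hzw)
    (h.covBy_of_isJoinIn ha hb hab hw hz' hz'w)

theorem natCard_le_three (h : IsOrthodomain X) {k : X} {γ : Type*}
    (ψ : Set.Iic k ≃o Setoid γ) : Nat.card γ ≤ 3 := by
  classical
  by_contra! hγ
  have : Fintype γ := @Fintype.ofFinite γ (Nat.finite_of_card_ne_zero (by omega))
  obtain ⟨e⟩ : Nonempty (Fin 4 ↪ γ) := Function.Embedding.nonempty_of_card_le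
    (by simpa [Nat.card_eq_fintype_card, Nat.lt_iff_add_one_le] using hγ)
  have hne : ∀ {i j : Fin 4}, i ≠ j → e i ≠ e j := e.injective.ne
  -- two disjoint pairs of points give two atoms whose join has no third atom below it
  set U := Setoid.pair (e 0) (e 1)
  set V := Setoid.pair (e 2) (e 3)
  have hatom : ∀ {σ : Setoid γ}, IsAtom σ → IsAtom ((ψ.symm σ : Set.Iic k) : X) :=
    fun hσ => ((ψ.symm.isAtom_iff _).2 hσ).of_isAtom_coe_Iic
  have hUV : U ≠ V := by
    rw [Ne, Setoid.pair_eq_pair_iff (hne (by decide))]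
    rintro (⟨he, -⟩ | ⟨he, -⟩) <;> exact hne (by decide) he
  have hjoin : IsJoinIn (ψ.symm (U ⊔ V) : X) (ψ.symm U) (ψ.symm V) (ψ.symm (U ⊔ V)) := by
    refine IsLUB.isJoinIn_Iic ?_ |>.restrict
    rw [← Set.image_pair, ψ.symm.isLUB_image']
    exact isLUB_pair
  obtain ⟨c, hc, hcq, hcU, hcV⟩ := h.exists_third_atom
    (hatom (Setoid.isAtom_pair (hne (by decide)))) (hatom (Setoid.isAtom_pair (hne (by decide))))
    (fun he => hUV (ψ.symm.injective (Subtype.ext he))) hjoin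
  have hck : c ≤ k := hcq.trans (ψ.symm (U ⊔ V)).2
  have hcle : ψ ⟨c, hck⟩ ≤ U ⊔ V := by
    rw [← ψ.apply_symm_apply (U ⊔ V)]
    exact ψ.monotone hcq
  rcases Setoid.eq_or_eq_of_isAtom_of_le_sup (hne (by decide)) (hne (by decide))
    (hne (by decide)) (hne (by decide)) (hne (by decide)) (hne (by decide))
    ((ψ.isAtom_iff _).2 (hc.Iic hck)) hcle with he | he
  · exact hcU (Subtype.ext_iff.1 (ψ.symm_apply_eq.2 he.symm)).symm
  · exact hcV (Subtype.ext_iff.1 (ψ.symm_apply_eq.2 he.symm)).symm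

theorem not_lt_lt_lt_of_compactIn (h : IsOrthodomain X) {k x y : X} (hk : CompactIn k)
    (h₁ : ⊥ < x) (h₂ : x < y) (h₃ : y < k) : False := by
  obtain ⟨γ, _, ⟨ψ⟩⟩ := h.exists_orderIso_setoid (h.compactIn_Iic hk le_rfl)
  exact (three_lt_natCard_of_orderIso ψ h₁ h₂ h₃).not_ge (h.natCard_le_three ψ)

theorem exists_isAtom_le_not_le (h : IsOrthodomain X) {x u : X} (hux : ¬ u ≤ x) :
    ∃ a, IsAtom a ∧ a ≤ u ∧ ¬ a ≤ x := by
  by_contra! hc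
  exact hux ((h.atomistic u).2 fun a ha => hc a ha.1 ha.2)

theorem compactIn_of_covBy (h : IsOrthodomain X) {z w : X} (hz : IsAtom z) (hzw : z ⋖ w) :
    CompactIn w := by
  obtain ⟨a, ha, haw, haz⟩ := h.exists_isAtom_le_not_le hzw.lt.not_ge
  have hza : z ≠ a := fun he => haz (he ▸ le_rfl)
  have hw : IsJoinIn w z a w := ⟨hzw.le, haw, le_rfl, fun c hcw hzc hac =>
    ((hzw.eq_or_eq hzc hcw).resolve_left fun he => haz (he ▸ hac)).ge⟩
  exact (h.atoms_compact z hz).of_isLUB_pair (h.atoms_compact a ha)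
    (h.isLUB_of_isJoinIn hz ha hza hw hz ha hza hzw.le haw)

theorem exists_covBy_isJoinIn (h : IsOrthodomain X) {x a u : X} (hx : BasicIn x)
    (ha : IsAtom a) (hax : ¬ a ≤ x) (hxu : x ≤ u) (hau : a ≤ u) :
    ∃ c, x ⋖ c ∧ IsJoinIn u x a c := by
  rcases hx with rfl | hx
  · exact ⟨a, ha.bot_covBy, isJoinIn_bot_left hau⟩
  obtain ⟨c, hc⟩ := (h.downset_boolean u).1 {(⟨x, hxu⟩ : Set.Iic u), ⟨a, hau⟩}
  have hjoin : IsJoinIn u x a c := hc.isJoinIn_Iic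
  exact ⟨c, h.covBy_of_isJoinIn hx ha (fun he => hax (he ▸ le_rfl)) hjoin.restrict hx hjoin.1,
    hjoin⟩

end IsOrthodomain

section Directions

variable {X : Type*} [PartialOrder X]

theorem dualModularIn_self (t : X) : DualModularIn t t := by
  refine ⟨le_rfl, fun y z j m m' hy hz htz hj hm hm' => ?_,
    fun w y j m m' hw hy hwy hj hm hm' => ?_⟩
  · obtain rfl := le_antisymm hz htz
    obtain rfl := le_antisymm hj.2.2.1 hj.1
    obtain rfl := hm.unique (isGLB_pair_of_le le_rfl)
    obtain rfl := hm'.unique (isGLB_pair_of_le hy)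
    exact ⟨le_rfl, hy, le_rfl, fun _ _ h _ => h⟩
  · obtain rfl := le_antisymm hj.2.2.1 hj.2.1
    obtain rfl := hm.unique (isGLB_pair_of_ge hy)
    obtain rfl := hm'.unique (isGLB_pair_of_ge hy)
    exact ⟨hwy, le_rfl, hy, fun _ _ _ h => h⟩

variable [OrderBot X]

theorem dualModularIn_bot (t : X) : DualModularIn t ⊥ := by
  refine ⟨bot_le, fun y z j m m' hy _ _ hj hm hm' => ?_,
    fun w y j m m' hw _ hwy hj hm hm' => ?_⟩
  · obtain rfl := hj.unique (isJoinIn_bot_left hy)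
    obtain rfl := hm.unique hm'
    exact isJoinIn_bot_left ((hm.1 (Set.mem_insert _ _)).trans hy)
  · obtain rfl := hj.unique (isJoinIn_bot_left hw).symm
    obtain rfl := hm.unique (isGLB_pair_of_le hwy)
    obtain rfl := hm'.unique (isGLB_pair_of_le bot_le)
    exact (isJoinIn_bot_left hw).symm

theorem PrincipalPairFor.swap {t x a b : X} (h : PrincipalPairFor t x a b) :
    PrincipalPairFor t x b a := by
  obtain ⟨ha, hb, hglb, hcases⟩ := h
  refine ⟨hb, ha, Set.pair_comm a b ▸ hglb, ?_⟩
  rcases hcases with hcase | hcase | ⟨hjoin, hcase⟩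
  exacts [Or.inr (Or.inl hcase), Or.inl hcase, Or.inr (Or.inr ⟨hjoin.symm, hcase⟩)]

theorem principalPairFor_bot_self (t : X) : PrincipalPairFor t ⊥ ⊥ t :=
  ⟨dualModularIn_bot t, dualModularIn_self t, isGLB_pair_of_le bot_le,
    Or.inr (Or.inl ⟨rfl, Or.inl rfl⟩)⟩

theorem isDirectionFor_bot_self : IsDirectionFor (⊥ : X) fun y => (⊥, y.1) := by
  refine ⟨Or.inl rfl, fun y => principalPairFor_bot_self y.1,
    fun y z hyz => ⟨isGLB_pair_of_ge bot_le, isGLB_pair_of_le hyz⟩, ?_⟩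
  intro y z _ hz _ hdz
  exact (hz.lt.ne (congrArg Prod.snd hdz).symm).elim

namespace IsDirectionFor

variable {x : X} {d : {y : X // x ≤ y} → X × X}

theorem swap (hd : IsDirectionFor x d) : IsDirectionFor x fun y => (d y).swap := by
  obtain ⟨hx, hpair, hres, hcov⟩ := hd
  refine ⟨hx, fun y => (hpair y).swap, fun y z hyz => (hres y z hyz).symm, ?_⟩
  intro y z hy hz hdy hdz
  obtain ⟨j, hj, hzj, hyj⟩ := hcov z y hz hy (by simpa using congrArg Prod.swap hdz)
    (by simpa using congrArg Prod.swap hdy)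
  exact ⟨j, Set.pair_comm y.1 z.1 ▸ hj, hyj, hzj⟩

theorem eq_of_fst_eq_snd (hd : IsDirectionFor x d) (y : {y : X // x ≤ y})
    (he : (d y).1 = (d y).2) : y.1 = x := by
  obtain ⟨-, -, hglb, hcases⟩ := hd.2.1 y
  rw [he, Set.pair_eq_singleton] at hglb
  have hx : x = (d y).2 := hglb.unique isGLB_singleton
  rcases hcases with ⟨hy, -⟩ | ⟨hy, -⟩ | ⟨hjoin, -⟩
  · exact hy.symm.trans (he.trans hx.symm)
  · exact hy.symm.trans hx.symm
  · exact le_antisymm (hjoin.2.2.2 x y.2 (he.trans hx.symm).le hx.ge) y.2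

theorem eq_or_eq_of_covBy (hd : IsDirectionFor x d) {w : X} (hxw : x ⋖ w) :
    d ⟨w, hxw.le⟩ = (x, w) ∨ d ⟨w, hxw.le⟩ = (w, x) := by
  obtain ⟨hA, hB, hglb, -⟩ := hd.2.1 ⟨w, hxw.le⟩
  have hne := mt (hd.eq_of_fst_eq_snd ⟨w, hxw.le⟩) hxw.lt.ne'
  rcases hxw.eq_or_eq (hglb.1 (Set.mem_insert _ _)) hA.1 with h₁ | h₁ <;>
  rcases hxw.eq_or_eq (hglb.1 (Set.mem_insert_of_mem _ rfl)) hB.1 with h₂ | h₂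
  · exact absurd (h₁.trans h₂.symm) hne
  · exact Or.inl (Prod.ext h₁ h₂)
  · exact Or.inr (Prod.ext h₁ h₂)
  · exact absurd (h₁.trans h₂.symm) hne

theorem not_mixed_of_dualModularIn (hd : IsDirectionFor x d) (hx : ∀ t, DualModularIn t x)
    {w₁ w₂ : X} (h₁ : x ⋖ w₁) (h₂ : x ⋖ w₂) (hd₁ : d ⟨w₁, h₁.le⟩ = (w₁, x))
    (hd₂ : d ⟨w₂, h₂.le⟩ = (x, w₂)) : False := by
  obtain ⟨j, hj, -, -⟩ := hd.2.2.2 _ _ h₂ h₁ hd₂ hd₁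
  have hw₁j : w₁ ≤ j := hj.1 (Set.mem_insert_of_mem _ rfl)
  have hw₂j : w₂ ≤ j := hj.1 (Set.mem_insert _ _)
  have hxj : x ≤ j := h₁.le.trans hw₁j
  obtain ⟨-, hres₁⟩ := hd.2.2.1 ⟨w₁, h₁.le⟩ ⟨j, hxj⟩ hw₁j
  obtain ⟨hres₂, -⟩ := hd.2.2.1 ⟨w₂, h₂.le⟩ ⟨j, hxj⟩ hw₂j
  rw [hd₁] at hres₁
  rw [hd₂] at hres₂
  -- so neither component of `d j` is `j`, and the principal pair at `j` is of the third kind,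
  -- which requires `x` not to be dual modular
  have hw₁B : ¬ w₁ ≤ (d ⟨j, hxj⟩).2 := fun hle =>
    h₁.lt.not_ge (hres₁.2 (by rintro _ (rfl | rfl); exacts [le_rfl, hle]))
  have hw₂A : ¬ w₂ ≤ (d ⟨j, hxj⟩).1 := fun hle =>
    h₂.lt.not_ge (hres₂.2 (by rintro _ (rfl | rfl); exacts [le_rfl, hle]))
  rcases (hd.2.1 ⟨j, hxj⟩).2.2.2 with ⟨hA, -⟩ | ⟨hB, -⟩ | ⟨-, -, hndm⟩
  · exact hw₂A (hA ▸ hw₂j)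
  · exact hw₁B (hB ▸ hw₁j)
  · exact hndm (hx j)

theorem not_mixed_of_isAtom (h : IsOrthodomain X) (hd : IsDirectionFor x d) (hx : IsAtom x)
    {w₁ w₂ : X} (h₁ : x ⋖ w₁) (h₂ : x ⋖ w₂) (hd₁ : d ⟨w₁, h₁.le⟩ = (w₁, x))
    (hd₂ : d ⟨w₂, h₂.le⟩ = (x, w₂)) : False := by
  obtain ⟨j, hj, -, hw₁j⟩ := hd.2.2.2 _ _ h₂ h₁ hd₂ hd₁
  have hk : CompactIn j :=
    (h.compactIn_of_covBy hx h₂).of_isLUB_pair (h.compactIn_of_covBy hx h₁) hj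
  exact h.not_lt_lt_lt_of_compactIn hk hx.bot_lt h₁.lt hw₁j.lt

theorem not_mixed (h : IsOrthodomain X) (hd : IsDirectionFor x d) {w₁ w₂ : X} (h₁ : x ⋖ w₁)
    (h₂ : x ⋖ w₂) (hd₁ : d ⟨w₁, h₁.le⟩ = (w₁, x)) (hd₂ : d ⟨w₂, h₂.le⟩ = (x, w₂)) : False := by
  rcases hd.1 with rfl | hx
  · exact hd.not_mixed_of_dualModularIn dualModularIn_bot h₁ h₂ hd₁ hd₂
  · exact hd.not_mixed_of_isAtom h hx h₁ h₂ hd₁ hd₂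

theorem eq_of_forall_covBy (h : IsOrthodomain X) (hd : IsDirectionFor x d)
    (hcov : ∀ w (hw : x ⋖ w), d ⟨w, hw.le⟩ = (w, x)) (y : {y : X // x ≤ y}) :
    d y = (y.1, x) := by
  obtain ⟨hA, hB, hglb, -⟩ := hd.2.1 y
  have hxA : x ≤ (d y).1 := hglb.1 (Set.mem_insert _ _)
  have hxB : x ≤ (d y).2 := hglb.1 (Set.mem_insert_of_mem _ rfl)
  -- an atom `a ≤ y` outside `x` spans with `x` a cover `c`, on which `d` is `(c, x)`
  have key : ∀ a, IsAtom a → a ≤ y.1 → a ≤ (d y).1 ∧ (a ≤ (d y).2 → a ≤ x) := by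
    intro a ha hay
    by_cases hax : a ≤ x
    · exact ⟨hax.trans hxA, fun _ => hax⟩
    obtain ⟨c, hxc, hjoin⟩ := h.exists_covBy_isJoinIn hd.1 ha hax y.2 hay
    obtain ⟨hresA, hresB⟩ := hd.2.2.1 ⟨c, hxc.le⟩ y hjoin.2.2.1
    rw [hcov c hxc] at hresA hresB
    refine ⟨hjoin.2.1.trans (hresA.1 (Set.mem_insert_of_mem _ rfl)), fun haB => ?_⟩
    have hcB : c ≤ (d y).2 := hjoin.2.2.2 _ hB.1 hxB haB
    exact absurd (hresB.2 (by rintro _ (rfl | rfl); exacts [le_rfl, hcB])) hxc.lt.not_ge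
  exact Prod.ext (le_antisymm hA.1 ((h.atomistic y).2 fun a ha => (key a ha.1 ha.2).1))
    (le_antisymm ((h.atomistic _).2 fun a ha => (key a ha.1 (ha.2.trans hB.1)).2 ha.2) hxB)

theorem eq_of_covBy (h : IsOrthodomain X) (hd : IsDirectionFor x d) {w : X} (hw : x ⋖ w)
    (hdw : d ⟨w, hw.le⟩ = (w, x)) (y : {y : X // x ≤ y}) : d y = (y.1, x) :=
  hd.eq_of_forall_covBy h (fun _ hw' => (hd.eq_or_eq_of_covBy hw').resolve_left
    (hd.not_mixed h hw hw' hdw)) y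

end IsDirectionFor

end Directions

section Constants

variable {X : Type*} [PartialOrder X] [OrderBot X]

namespace ODir

theorem ext' {d e : ODir X} (h₁ : d.1.1 = e.1.1)
    (h₂ : ∀ y (hd : d.1.1 ≤ y) (he : e.1.1 ≤ y), d.1.2 ⟨y, hd⟩ = e.1.2 ⟨y, he⟩) : d = e := by
  obtain ⟨⟨x, f⟩, hf⟩ := d
  obtain ⟨⟨x', g⟩, hg⟩ := e
  obtain rfl : x = x' := h₁
  obtain rfl : f = g := funext fun y => h₂ y.1 y.2 y.2
  rfl

def zero : ODir X := ⟨⟨⊥, fun y => (⊥, y.1)⟩, isDirectionFor_bot_self⟩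

def swap (d : ODir X) : ODir X := ⟨⟨d.1.1, fun y => (d.1.2 y).swap⟩, d.2.swap⟩

theorem isZeroD_zero : IsZeroD (zero : ODir X) := ⟨rfl, fun _ => rfl⟩

theorem isOneD_swap_zero : IsOneD (zero : ODir X).swap := ⟨rfl, fun _ => rfl⟩

theorem isComplD_swap (d : ODir X) : IsComplD d d.swap :=
  ⟨rfl, fun _ _ hy => by obtain rfl := Subtype.ext hy; rfl⟩

theorem exists_fst_ne_snd (he : EnoughDirections X) (d : ODir X) :
    ∃ y, (d.1.2 y).1 ≠ (d.1.2 y).2 := by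
  by_contra! hc
  exact he.1 d.1.1 d.2.1 fun b hb => (d.2.eq_of_fst_eq_snd ⟨b, hb⟩ (hc _)).le

theorem eq_of_covBy (h : IsOrthodomain X) {f f' : ODir X} {w : X} (heq : f.1.1 = f'.1.1)
    (hf : f.1.1 ⋖ w) (hf' : f'.1.1 ⋖ w) (hfw : f.1.2 ⟨w, hf.le⟩ = (w, f.1.1))
    (hf'w : f'.1.2 ⟨w, hf'.le⟩ = (w, f'.1.1)) : f = f' :=
  ext' heq fun y hy hy' => by
    rw [f.2.eq_of_covBy h hf hfw ⟨y, hy⟩, f'.2.eq_of_covBy h hf' hf'w ⟨y, hy'⟩]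
    exact Prod.ext rfl heq

end ODir

theorem IsZeroD.unique {d e : ODir X} (hd : IsZeroD d) (he : IsZeroD e) : d = e :=
  ODir.ext' (hd.1.trans he.1.symm) fun y _ _ => by rw [hd.2, he.2]

theorem IsOneD.unique {d e : ODir X} (hd : IsOneD d) (he : IsOneD e) : d = e :=
  ODir.ext' (hd.1.trans he.1.symm) fun y _ _ => by rw [hd.2, he.2]

theorem IsOneD.not_isZeroD (he : EnoughDirections X) {d : ODir X} (ho : IsOneD d) :
    ¬ IsZeroD d := fun hz => by
  obtain ⟨y, hy⟩ := ODir.exists_fst_ne_snd he d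
  exact hy ((congrArg Prod.fst (hz.2 y)).trans (congrArg Prod.snd (ho.2 y)).symm)

theorem IsComplD.symm {d e : ODir X} (hc : IsComplD d e) : IsComplD e d :=
  ⟨hc.1.symm, fun y y' hy => by rw [hc.2 y' y hy.symm]⟩

theorem IsComplD.isOneD_iff {d e : ODir X} (hc : IsComplD d e) : IsOneD d ↔ IsZeroD e :=
  ⟨fun ho => ⟨hc.1.trans ho.1, fun y => by rw [hc.2 y ⟨y.1, hc.1 ▸ y.2⟩ rfl, ho.2]⟩,
    fun hz => ⟨hc.1.symm.trans hz.1, fun y => by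
      rw [hc.symm.2 y ⟨y.1, hc.1.symm ▸ y.2⟩ rfl, hz.2]⟩⟩

theorem isComplD_of_isOneD_of_isZeroD {d e : ODir X} (hd : IsOneD d) (he : IsZeroD e) :
    IsComplD d e :=
  ⟨he.1.trans hd.1.symm, fun y y' hy => by rw [he.2, hd.2, hy]⟩

end Constants

namespace OSum

variable {X : Type*} [PartialOrder X] [OrderBot X] {d e f : ODir X}

theorem of_isZeroD_right (he : IsZeroD e) : OSum d e d := Or.inl ⟨he, rfl⟩

theorem of_isZeroD_left (hd : IsZeroD d) : OSum d e e := Or.inr (Or.inl ⟨hd, rfl⟩)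

theorem of_isComplD (hc : IsComplD d e) (hf : IsOneD f) : OSum d e f :=
  Or.inr (Or.inr (Or.inl ⟨hc, hf⟩))

theorem comm (hs : OSum d e f) : OSum e d f := by
  rcases hs with ⟨he, rfl⟩ | ⟨hd, rfl⟩ | ⟨hc, hf⟩ |
    ⟨w, z, hx, hy, hxy, hw, hz, hzx, hzy, hzw, hfz, hdw, hew, hfw⟩
  · exact of_isZeroD_left he
  · exact of_isZeroD_right hd
  · exact of_isComplD hc.symm hf
  · exact Or.inr (Or.inr (Or.inr ⟨w, z, hy, hx, hxy.symm, Set.pair_comm d.1.1 e.1.1 ▸ hw,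
      hz, hzy, hzx, hzw, hfz, hew, hdw, hfw⟩))

theorem eq_of_isZeroD_right (he : IsZeroD e) (hs : OSum d e f) : f = d := by
  rcases hs with ⟨-, rfl⟩ | ⟨hd, rfl⟩ | ⟨hc, hf⟩ | ⟨-, -, -, hy, -⟩
  · rfl
  · exact he.unique hd
  · exact hf.unique (hc.isOneD_iff.2 he)
  · exact absurd he.1 hy.ne_bot

theorem eq_of_isZeroD_left (hd : IsZeroD d) (hs : OSum d e f) : f = e :=
  hs.comm.eq_of_isZeroD_right hd

theorem isOneD_of_isComplD (hc : IsComplD d e) (hs : OSum d e f) : IsOneD f := by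
  rcases hs with ⟨he, rfl⟩ | ⟨hd, rfl⟩ | ⟨-, hf⟩ | ⟨-, -, -, -, hxy, -⟩
  · exact hc.isOneD_iff.2 he
  · exact hc.symm.isOneD_iff.2 hd
  · exact hf
  · exact absurd hc.1.symm hxy

theorem unique (h : IsOrthodomain X) {f' : ODir X} (hs : OSum d e f) (hs' : OSum d e f') :
    f = f' := by
  rcases hs with ⟨he, rfl⟩ | ⟨hd, rfl⟩ | ⟨hc, hf⟩ |
    ⟨w, z, hx, hy, hxy, hw, hz, hzx, hzy, hzw, rfl, -, -, _, hfw⟩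
  · exact (hs'.eq_of_isZeroD_right he).symm
  · exact (hs'.eq_of_isZeroD_left hd).symm
  · exact hf.unique (hs'.isOneD_of_isComplD hc)
  rcases hs' with ⟨he, -⟩ | ⟨hd, -⟩ | ⟨hc, -⟩ |
    ⟨w', z', -, -, -, hw', hz', hzx', hzy', hzw', rfl, -, -, _, hf'w⟩
  · exact absurd he.1 hy.ne_bot
  · exact absurd hd.1 hx.ne_bot
  · exact absurd hc.1.symm hxy
  obtain rfl := hw.unique hw'
  exact ODir.eq_of_covBy h (h.third_atom_unique hx hy hxy hw.isJoinIn hz hzw.le hzx hzy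
    hz' hzw'.le hzx' hzy') hzw hzw' hfw hf'w

theorem isComplD_of_isOneD (hs : OSum d e f) (hf : IsOneD f) : IsComplD d e := by
  rcases hs with ⟨he, rfl⟩ | ⟨hd, rfl⟩ | ⟨hc, -⟩ | ⟨-, z, -, -, -, -, hz, -, -, -, hfz, -⟩
  · exact isComplD_of_isOneD_of_isZeroD hf he
  · exact (isComplD_of_isOneD_of_isZeroD hf hd).symm
  · exact hc
  · exact absurd (hfz.symm.trans hf.1) hz.ne_bot

theorem isZeroD_of_self (he : EnoughDirections X) (hs : OSum d d f) : IsZeroD d := by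
  rcases hs with ⟨hd, -⟩ | ⟨hd, -⟩ | ⟨hc, -⟩ | ⟨-, -, -, -, hxx, -⟩
  · exact hd
  · exact hd
  · obtain ⟨y, hy⟩ := ODir.exists_fst_ne_snd he d
    exact absurd (congrArg Prod.snd (hc.2 y y rfl)) hy.symm
  · exact absurd rfl hxx

theorem assoc (h : IsOrthodomain X) (he : EnoughDirections X) {g u : ODir X}
    (hdeg : OSum d e g) (hgfu : OSum g f u) : ∃ v, OSum e f v ∧ OSum d v u := by
  by_cases hf : IsZeroD f
  · exact ⟨e, of_isZeroD_right hf, hgfu.eq_of_isZeroD_right hf ▸ hdeg⟩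
  rcases hdeg with ⟨he0, rfl⟩ | ⟨hd0, rfl⟩ | ⟨hc, hg⟩ |
    ⟨w, z, hx, hy, hxy, hw, hz, hzx, hzy, hzw, rfl, ⟨hdw, hdv⟩, hew, _, hgv⟩
  · exact ⟨f, of_isZeroD_left he0, hgfu⟩
  · exact ⟨u, hgfu, of_isZeroD_left hd0⟩
  · rcases hgfu with ⟨hf0, -⟩ | ⟨hg0, -⟩ | ⟨hc', -⟩ | ⟨-, -, hgat, -⟩
    · exact absurd hf0 hf
    · exact absurd hg0 (hg.not_isZeroD he)
    · exact absurd (hc'.isOneD_iff.1 hg) hf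
    · exact absurd hg.1 hgat.ne_bot
  rcases hgfu with ⟨hf0, -⟩ | ⟨hg0, -⟩ | ⟨hc, hu⟩ |
    ⟨w', -, -, hfat, hgf, hw', -, -, -, -, -, ⟨_, hgv'⟩, -⟩
  · exact absurd hf0 hf
  · exact absurd hg0.1 hz.ne_bot
  · -- `e ⊕ g' = d'`, where `g'` and `d'` are the complements of `g` and `d`
    have hfz : f.1.1 = g.1.1 := hc.1
    have hfw : f.1.1 ≤ w := hfz ▸ hzw.le
    have hfv : f.1.2 ⟨w, hfw⟩ = (f.1.1, w) := by
      rw [hc.2 ⟨w, hfw⟩ ⟨w, hzw.le⟩ rfl, hgv, hfz]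
    have hlub : IsLUB {e.1.1, f.1.1} w := hfz ▸
      h.isLUB_of_isJoinIn hx hy hxy hw.isJoinIn hy hz hzy.symm (hw.1 (by simp)) hzw.le
    refine ⟨d.swap, Or.inr (Or.inr (Or.inr ⟨w, d.1.1, hy, hfz ▸ hz, hfz ▸ hzy.symm, hlub, hx,
      hxy, hfz ▸ hzx.symm, h.covBy_of_isJoinIn hx hy hxy hw.isJoinIn hx hdw, rfl, hew,
      ⟨hfw, hfv⟩, ⟨hdw, by simp [ODir.swap, hdv]⟩⟩)), of_isComplD (ODir.isComplD_swap d) hu⟩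
  · -- `g` would be a direction for the atom `g.1.1` with values of both orientations
    exact (g.2.not_mixed h hzw (h.covBy_of_isJoinIn hz hfat hgf hw'.isJoinIn hz
      (hw'.1 (by simp))) hgv hgv').elim

end OSum

/-- If `X` is an orthodomain with enough directions, then `oDir(X)` with the
partial sum `⊕`, orthocomplementation `d ↦ d'`, and constants `0`, `1` is an
orthoalgebra: `⊕` is well defined, commutative and associative, `0` and `1`
exist, `d'` is the unique direction with `d ⊕ d' = 1`, and `d ⊕ d` is defined
only for `d = 0`. -/
theorem stmt17 {X : Type*} [PartialOrder X] [OrderBot X]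
    (h : IsOrthodomain X) (he : EnoughDirections X) :
    (∀ d e f f' : ODir X, OSum d e f → OSum d e f' → f = f') ∧
    (∀ d e f : ODir X, OSum d e f → OSum e d f) ∧
    (∀ d e f g u : ODir X, OSum d e g → OSum g f u →
      ∃ v : ODir X, OSum e f v ∧ OSum d v u) ∧
    (∃ z : ODir X, IsZeroD z) ∧ (∃ o : ODir X, IsOneD o) ∧
    (∀ d : ODir X, ∃ e o : ODir X, IsComplD d e ∧ IsOneD o ∧ OSum d e o) ∧
    (∀ d e f : ODir X, OSum d e f → IsOneD f → IsComplD d e) ∧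
    (∀ d f : ODir X, OSum d d f → IsZeroD d) :=
  ⟨fun _ _ _ _ hs hs' => hs.unique h hs', fun _ _ _ hs => hs.comm,
    fun _ _ _ _ _ hdeg hgfu => hdeg.assoc h he hgfu,
    ⟨ODir.zero, ODir.isZeroD_zero⟩, ⟨ODir.zero.swap, ODir.isOneD_swap_zero⟩,
    fun d => ⟨d.swap, ODir.zero.swap, ODir.isComplD_swap d, ODir.isOneD_swap_zero,
      OSum.of_isComplD (ODir.isComplD_swap d) ODir.isOneD_swap_zero⟩,
    fun _ _ _ hs ho => hs.isComplD_of_isOneD ho, fun _ _ hs => hs.isZeroD_of_self he⟩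
end

section
/- In the hypergraph of an orthoalgebra A, if two lines have at least two points in common then they are equal. -/
universe u

/-- An orthoalgebra: a set with a partial commutative associative sum `⊕`
(with domain of definition `Perp`), an orthocomplementation `'`, and constants
`0`, `1` (with `0 = 1'`), such that `a'` is the unique element with
`a ⊕ a' = 1`, and `a ⊕ a` is defined only when `a = 0`.  The operation
`oplus` is a total function whose values are only meaningful on `Perp`. -/
class Orthoalgebra (A : Type u) where
  Perp : A → A → Prop
  oplus : A → A → A
  ocompl : A → A
  zero : A
  one : A
  perp_comm : ∀ {a b : A}, Perp a b → Perp b a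
  oplus_comm : ∀ {a b : A}, Perp a b → oplus a b = oplus b a
  perp_assoc : ∀ {a b c : A}, Perp a b → Perp (oplus a b) c →
    Perp b c ∧ Perp a (oplus b c)
  oplus_assoc : ∀ {a b c : A}, Perp a b → Perp (oplus a b) c →
    oplus (oplus a b) c = oplus a (oplus b c)
  perp_ocompl : ∀ a : A, Perp a (ocompl a)
  oplus_ocompl : ∀ a : A, oplus a (ocompl a) = one
  ocompl_unique : ∀ {a b : A}, Perp a b → oplus a b = one → b = ocompl a
  perp_self : ∀ {a : A}, Perp a a → a = zero
  zero_def : zero = ocompl one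

open Orthoalgebra

variable {A : Type u} [Orthoalgebra A]

/-- A subalgebra of an orthoalgebra: contains `0` and `1`, closed under `'`
and under `⊕` of orthogonal pairs. -/
def IsOASubalg (S : Set A) : Prop :=
  zero ∈ S ∧ one ∈ S ∧ (∀ a ∈ S, ocompl a ∈ S) ∧
    ∀ a ∈ S, ∀ b ∈ S, Perp a b → oplus a b ∈ S

/-- A Boolean subalgebra of an orthoalgebra: a subalgebra which, as an
orthoalgebra in its own right, is Boolean, i.e. is isomorphic to the
orthoalgebra induced by a Boolean algebra. -/
def IsBooleanSubalg (S : Set A) : Prop :=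
  IsOASubalg S ∧
  ∃ (B : Type u) (_ : BooleanAlgebra B) (f : S → B),
    Function.Bijective f ∧
    (∀ z : S, (z : A) = zero → f z = ⊥) ∧
    (∀ o : S, (o : A) = one → f o = ⊤) ∧
    (∀ a c : S, (c : A) = ocompl (a : A) → f c = (f a)ᶜ) ∧
    (∀ a b : S, Perp (a : A) (b : A) ↔ f a ⊓ f b = ⊥) ∧
    (∀ a b c : S, Perp (a : A) (b : A) → (c : A) = oplus (a : A) (b : A) →
      f c = f a ⊔ f b)

/-!
Let `{0, a, a', 1}` and `{0, b, b', 1}` be two distinct points on the line `W₁`, with `a ≠ 0, 1`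
and `b` outside the first point. In the eight-element Boolean algebra `W₁` one of `a, a'` is
orthogonal to one of `b, b'`: otherwise the four meets `a^± ∧ b^±` would be pairwise disjoint
and nonzero, and their joins would give sixteen distinct elements. An orthogonal pair `u, v`
with `u, v ≠ 0` and `u ⊕ v ≠ 1` makes `u, v, (u ⊕ v)'` the three atoms of any eight-element
Boolean subalgebra containing them, so such a subalgebra lies in every subalgebra containing
`u` and `v`. Applied to both lines this gives `W₁ = W₂`.
-/

section DisjointFamilies

open Function

variable {α ι : Type*}

theorem Finset.sup_injective_of_pairwise_disjoint [DistribLattice α] [OrderBot α] {g : ι → α}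
    (hdisj : Pairwise (Disjoint on g)) (hne : ∀ i, g i ≠ ⊥) :
    Injective fun s : Finset ι => s.sup g := by
  have hsubset : ∀ s t : Finset ι, s.sup g = t.sup g → s ⊆ t := by
    intro s t hst i hi
    by_contra hit
    have hdisj_t : Disjoint (g i) (t.sup g) :=
      Finset.disjoint_sup_right.2 fun j hj => hdisj fun hij => hit (hij ▸ hj)
    exact hne i (hdisj_t.eq_bot_of_le (hst ▸ Finset.le_sup hi))
  exact fun s t hst => (hsubset s t hst).antisymm (hsubset t s hst.symm)

theorem two_pow_card_le_natCard_of_pairwise_disjoint [DistribLattice α] [OrderBot α] [Finite α]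
    [Fintype ι] {g : ι → α} (hdisj : Pairwise (Disjoint on g)) (hne : ∀ i, g i ≠ ⊥) :
    2 ^ Fintype.card ι ≤ Nat.card α := by
  simpa [Nat.card_eq_fintype_card, Fintype.card_finset] using
    Nat.card_le_card_of_injective _ (Finset.sup_injective_of_pairwise_disjoint hdisj hne)

theorem Finset.sup_mem_of_disjoint_sup_mem [DistribLattice α] [OrderBot α] {g : ι → α}
    (hdisj : Pairwise (Disjoint on g)) {C : Set α} (hbot : ⊥ ∈ C)
    (hsup : ∀ a ∈ C, ∀ b ∈ C, Disjoint a b → a ⊔ b ∈ C) (hg : ∀ i, g i ∈ C) (s : Finset ι) :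
    s.sup g ∈ C := by
  classical
  induction s using Finset.induction_on with
  | empty => exact hbot
  | insert i s his ih =>
    rw [Finset.sup_insert]
    exact hsup _ (hg i) _ ih <|
      Finset.disjoint_sup_right.2 fun j hj => hdisj fun hij => his (hij ▸ hj)

theorem eq_univ_of_disjoint_sup_mem [DistribLattice α] [OrderBot α] [Finite α] [Fintype ι]
    {g : ι → α} (hcard : Nat.card α = 2 ^ Fintype.card ι) (hdisj : Pairwise (Disjoint on g))
    (hne : ∀ i, g i ≠ ⊥) {C : Set α} (hbot : ⊥ ∈ C)
    (hsup : ∀ a ∈ C, ∀ b ∈ C, Disjoint a b → a ⊔ b ∈ C) (hg : ∀ i, g i ∈ C) :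
    C = Set.univ := by
  have hsurj := ((Finset.sup_injective_of_pairwise_disjoint hdisj hne).bijective_of_nat_card_le
    (by simp [hcard, Nat.card_eq_fintype_card, Fintype.card_finset])).surjective
  refine Set.eq_univ_of_forall fun a => ?_
  obtain ⟨s, rfl⟩ := hsurj a
  exact Finset.sup_mem_of_disjoint_sup_mem hdisj hbot hsup hg s

end DisjointFamilies

section BooleanAlgebra

open Function

variable {α : Type*} [BooleanAlgebra α]

theorem disjoint_or_of_natCard_lt_sixteen [Finite α] (hα : Nat.card α < 16) (x y : α) :
    Disjoint x y ∨ Disjoint x yᶜ ∨ Disjoint xᶜ y ∨ Disjoint xᶜ yᶜ := by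
  by_contra! h
  obtain ⟨hxy, hxy', hx'y, hx'y'⟩ := h
  let part : Bool → α → α := fun p z => bif p then z else zᶜ
  have hpart : ∀ z : α, Pairwise (Disjoint on fun p => part p z) := by
    intro z p q hpq
    cases p <;> cases q
    all_goals first
      | exact absurd rfl hpq | exact disjoint_compl_left | exact disjoint_compl_right
  let g : Bool × Bool → α := fun p => part p.1 x ⊓ part p.2 y
  have hdisj : Pairwise (Disjoint on g) := by
    rintro ⟨p, q⟩ ⟨p', q'⟩ hne
    by_cases hp : p = p'
    · exact (hpart y fun hq => hne (by subst hp hq; rfl)).mono inf_le_right inf_le_right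
    · exact (hpart x hp).mono inf_le_left inf_le_left
  have hne : ∀ i, g i ≠ ⊥ := by
    rintro ⟨_ | _, _ | _⟩ <;> simpa [g, part, ← disjoint_iff]
  have := two_pow_card_le_natCard_of_pairwise_disjoint hdisj hne
  simp only [Fintype.card_prod, Fintype.card_bool] at this
  omega

theorem eq_univ_of_natCard_eq_eight (hα : Nat.card α = 8) {x y : α} (hx : x ≠ ⊥) (hy : y ≠ ⊥)
    (hxy : Disjoint x y) (hxy_top : x ⊔ y ≠ ⊤) {C : Set α} (hbot : ⊥ ∈ C)
    (hsup : ∀ a ∈ C, ∀ b ∈ C, Disjoint a b → a ⊔ b ∈ C) (hxC : x ∈ C) (hyC : y ∈ C)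
    (hxyC : (x ⊔ y)ᶜ ∈ C) : C = Set.univ := by
  have : Finite α := Nat.finite_of_card_ne_zero (by omega)
  have hxz : Disjoint x (x ⊔ y)ᶜ := disjoint_compl_right_iff.2 le_sup_left
  have hyz : Disjoint y (x ⊔ y)ᶜ := disjoint_compl_right_iff.2 le_sup_right
  have hz : (x ⊔ y)ᶜ ≠ ⊥ := compl_eq_bot.not.2 hxy_top
  refine eq_univ_of_disjoint_sup_mem (g := ![x, y, (x ⊔ y)ᶜ]) (by simpa using hα) ?_ ?_ hbot hsup ?_
  · intro i j hij
    fin_cases i <;> fin_cases j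
    all_goals first
      | exact absurd rfl hij | exact hxy | exact hxz | exact hyz
      | exact hxy.symm | exact hxz.symm | exact hyz.symm
  · intro i
    fin_cases i <;> assumption
  · intro i
    fin_cases i <;> assumption

end BooleanAlgebra

namespace Orthoalgebra

theorem ocompl_ocompl (a : A) : ocompl (ocompl a) = a :=
  (ocompl_unique (perp_comm (perp_ocompl a))
    (by rw [oplus_comm (perp_comm (perp_ocompl a)), oplus_ocompl])).symm

theorem ocompl_ne_zero {a : A} (ha : a ≠ one) : ocompl a ≠ zero := by
  intro h
  apply ha
  rw [← ocompl_ocompl a, h, zero_def, ocompl_ocompl]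

theorem exists_mem_ne_zero_ne_one {S : Set A} (hS : 2 < Nat.card S) :
    ∃ a ∈ S, a ≠ zero ∧ a ≠ one := by
  rw [Nat.card_coe_set_eq] at hS
  have hpair : ({zero, one} : Set A).ncard ≤ 2 := Set.ncard_insert_le _ _ |>.trans (by simp)
  obtain ⟨a, haS, ha⟩ := Set.exists_mem_notMem_of_ncard_lt_ncard (s := {zero, one}) (t := S)
    (by omega)
  simp only [Set.mem_insert_iff, Set.mem_singleton_iff, not_or] at ha
  exact ⟨a, haS, ha⟩

end Orthoalgebra

namespace IsBooleanSubalg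

variable {W : Set A}

theorem exists_perp (hW : IsBooleanSubalg W) (hWc : Nat.card W = 8) {a b : A} (ha : a ∈ W)
    (hb : b ∈ W) :
    ∃ u ∈ ({a, ocompl a} : Set A), ∃ v ∈ ({b, ocompl b} : Set A), Perp u v := by
  obtain ⟨⟨-, -, hcompl, -⟩, B, _, f, hbij, -, -, hfc, hfperp, -⟩ := hW
  have : Finite B := Nat.finite_of_card_ne_zero (by rw [← Nat.card_eq_of_bijective f hbij]; omega)
  have hBc : Nat.card B < 16 := by rw [← Nat.card_eq_of_bijective f hbij]; omega
  have hfa : f ⟨ocompl a, hcompl a ha⟩ = (f ⟨a, ha⟩)ᶜ := hfc _ _ rfl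
  have hfb : f ⟨ocompl b, hcompl b hb⟩ = (f ⟨b, hb⟩)ᶜ := hfc _ _ rfl
  have hperp : ∀ (u v : W), Disjoint (f u) (f v) → Perp (u : A) v := fun u v h =>
    (hfperp u v).2 (disjoint_iff.1 h)
  rcases disjoint_or_of_natCard_lt_sixteen hBc (f ⟨a, ha⟩) (f ⟨b, hb⟩) with h | h | h | h
  · exact ⟨a, .inl rfl, b, .inl rfl, hperp ⟨a, ha⟩ ⟨b, hb⟩ h⟩
  · exact ⟨a, .inl rfl, ocompl b, .inr rfl, hperp ⟨a, ha⟩ ⟨_, hcompl b hb⟩ (hfb ▸ h)⟩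
  · exact ⟨ocompl a, .inr rfl, b, .inl rfl, hperp ⟨_, hcompl a ha⟩ ⟨b, hb⟩ (hfa ▸ h)⟩
  · exact ⟨ocompl a, .inr rfl, ocompl b, .inr rfl,
      hperp ⟨_, hcompl a ha⟩ ⟨_, hcompl b hb⟩ (hfa ▸ hfb ▸ h)⟩

theorem subset_of_perp (hW : IsBooleanSubalg W) (hWc : Nat.card W = 8) {V : Set A}
    (hV : IsOASubalg V) {u v : A} (huW : u ∈ W) (hvW : v ∈ W) (huV : u ∈ V) (hvV : v ∈ V)
    (hu : u ≠ zero) (hv : v ≠ zero) (huv : Perp u v) (huv_one : oplus u v ≠ one) : W ⊆ V := by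
  obtain ⟨⟨hzW, hoW, hcW, hsW⟩, B, _, f, hbij, hf0, hf1, hfc, hfperp, hfsup⟩ := hW
  obtain ⟨hzV, -, hcV, hsV⟩ := hV
  have hBc : Nat.card B = 8 := by rw [← Nat.card_eq_of_bijective f hbij, hWc]
  have hf_ne {w w' : W} (h : (w : A) ≠ w') : f w ≠ f w' := fun hf => h (congrArg _ (hbij.1 hf))
  have hsum : oplus u v ∈ W := hsW u huW v hvW huv
  have hfsum : f ⟨oplus u v, hsum⟩ = f ⟨u, huW⟩ ⊔ f ⟨v, hvW⟩ := hfsup _ _ _ huv rfl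
  let C : Set B := f '' {w | (w : A) ∈ V}
  have hC : C = Set.univ := by
    refine eq_univ_of_natCard_eq_eight hBc (x := f ⟨u, huW⟩) (y := f ⟨v, hvW⟩) ?_ ?_ ?_ ?_
      ⟨⟨zero, hzW⟩, hzV, hf0 _ rfl⟩ ?_ ⟨_, huV, rfl⟩ ⟨_, hvV, rfl⟩ ?_
    · exact hf0 ⟨zero, hzW⟩ rfl ▸ hf_ne hu
    · exact hf0 ⟨zero, hzW⟩ rfl ▸ hf_ne hv
    · exact disjoint_iff.2 ((hfperp _ _).1 huv)
    · exact hfsum ▸ hf1 ⟨one, hoW⟩ rfl ▸ hf_ne huv_one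
    · rintro _ ⟨w, hwV, rfl⟩ _ ⟨w', hw'V, rfl⟩ hdisj
      have hperp : Perp (w : A) w' := (hfperp w w').2 (disjoint_iff.1 hdisj)
      exact ⟨⟨_, hsW _ w.2 _ w'.2 hperp⟩, hsV _ hwV _ hw'V hperp, hfsup _ _ _ hperp rfl⟩
    · exact ⟨⟨_, hcW _ hsum⟩, hcV _ (hsV _ huV _ hvV huv),
        (hfc ⟨_, hsum⟩ _ rfl).trans (congrArg _ hfsum)⟩
  intro w hw
  obtain ⟨w', hw'V, hw'⟩ : f ⟨w, hw⟩ ∈ C := hC ▸ Set.mem_univ _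
  rwa [hbij.1 hw'] at hw'V

end IsBooleanSubalg

/-- In the hypergraph of an orthoalgebra `A`, points are the 4-element Boolean
subalgebras and lines are the 8-element Boolean subalgebras (a point lies on a
line when it is contained in it).  If two lines have at least two points in
common, then they are equal. -/
theorem stmt18 (W₁ W₂ P₁ P₂ : Set A)
    (hW₁ : IsBooleanSubalg W₁) (hW₁c : Nat.card W₁ = 8)
    (hW₂ : IsBooleanSubalg W₂) (hW₂c : Nat.card W₂ = 8)
    (hP₁ : IsBooleanSubalg P₁) (hP₁c : Nat.card P₁ = 4)
    (hP₂ : IsBooleanSubalg P₂) (hP₂c : Nat.card P₂ = 4)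
    (hne : P₁ ≠ P₂)
    (h11 : P₁ ⊆ W₁) (h12 : P₁ ⊆ W₂) (h21 : P₂ ⊆ W₁) (h22 : P₂ ⊆ W₂) :
    W₁ = W₂ := by
  obtain ⟨⟨hP₁0, -, hP₁compl, -⟩, -⟩ := hP₁
  obtain ⟨⟨-, -, hP₂compl, -⟩, -⟩ := hP₂
  obtain ⟨a, haP₁, ha0, ha1⟩ := exists_mem_ne_zero_ne_one (S := P₁) (by omega)
  obtain ⟨b, hbP₂, hbP₁⟩ : ∃ b ∈ P₂, b ∉ P₁ := by
    by_contra! h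
    refine hne (Set.eq_of_subset_of_ncard_le h ?_ (Set.finite_of_ncard_ne_zero ?_)).symm <;>
      simp only [← Nat.card_coe_set_eq, hP₁c, hP₂c] <;> omega
  obtain ⟨u, hu, v, hv, huv⟩ := hW₁.exists_perp hW₁c (h11 haP₁) (h21 hbP₂)
  have huP₁ : u ∈ P₁ ∧ u ≠ zero := by
    rcases hu with rfl | rfl
    exacts [⟨haP₁, ha0⟩, ⟨hP₁compl _ haP₁, ocompl_ne_zero ha1⟩]
  have hvP₂ : v ∈ P₂ ∧ v ∉ P₁ := by
    rcases hv with rfl | rfl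
    exacts [⟨hbP₂, hbP₁⟩, ⟨hP₂compl _ hbP₂, fun h => hbP₁ (ocompl_ocompl b ▸ hP₁compl _ h)⟩]
  have hv0 : v ≠ zero := fun h => hvP₂.2 (h ▸ hP₁0)
  have huv_one : oplus u v ≠ one := fun h => hvP₂.2 (ocompl_unique huv h ▸ hP₁compl _ huP₁.1)
  exact (hW₁.subset_of_perp hW₁c hW₂.1 (h11 huP₁.1) (h21 hvP₂.1) (h12 huP₁.1) (h22 hvP₂.1)
    huP₁.2 hv0 huv huv_one).antisymm
    (hW₂.subset_of_perp hW₂c hW₁.1 (h12 huP₁.1) (h22 hvP₂.1) (h11 huP₁.1) (h21 hvP₂.1)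
      huP₁.2 hv0 huv huv_one)
end
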